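/- Every free-connex conjunctive query has the head-domination property: for each connected component E of the existential-connectivity graph G^∃_Q, there exists a relation R ∈ rels(Q) such that every output attribute appearing in any relation of E also appears in R. -/

import Mathlib

open Set

/-- A conjunctive query: a set of relation atoms (indexed by `ι`), each with a
set of attributes, together with a set of output (head) attributes. -/
structure CQ (ι Attr : Type) where
  attrs : ι → Set Attr
  head : Set Attr

variable {ι κ Attr V : Type}

/-- A database for `Q`: for each relation, a set of tuples over its attributes. -/
def Db (Q : CQ ι Attr) (V : Type) : Type := ∀ i : ι, Set (↥(Q.attrs i) → V)

/-- Restriction (projection) of a full assignment to a set of attributes. -/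
def restrict (f : Attr → V) (S : Set Attr) : ↥S → V := fun a => f a.1

/-- Query evaluation: projections onto the head of all joint assignments
consistent with every relation. -/
def CQ.eval (Q : CQ ι Attr) (D : Db Q V) : Set (↥Q.head → V) :=
  { h | ∃ f : Attr → V, (∀ i, restrict f (Q.attrs i) ∈ D i) ∧ restrict f Q.head = h }

/-- Sub-database (componentwise inclusion). -/
def Db.le {Q : CQ ι Attr} (D' D : Db Q V) : Prop := ∀ i, D' i ⊆ D i

/-- A witness: a sub-database preserving the query result. -/
def IsWitness (Q : CQ ι Attr) (D D' : Db Q V) : Prop :=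
  Db.le D' D ∧ Q.eval D' = Q.eval D

/-- Total number of tuples of a database. -/
noncomputable def dbSize [Fintype ι] {Q : CQ ι Attr} (D : Db Q V) : ℕ :=
  ∑ i, (D i).ncard

/-- A smallest witness. -/
def IsSmallestWitness [Fintype ι] (Q : CQ ι Attr) (D D' : Db Q V) : Prop :=
  IsWitness Q D D' ∧ ∀ D'' : Db Q V, IsWitness Q D D'' → dbSize D' ≤ dbSize D''

/-- Adjacency in the existential-connectivity graph `G^∃_Q`: two relations are
adjacent if they share a non-output attribute. -/
def exAdj (Q : CQ ι Attr) (i j : ι) : Prop :=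
  ((Q.attrs i ∩ Q.attrs j) \ Q.head).Nonempty

/-- Vertices of `G^∃_Q`: relations containing a non-output attribute. -/
def IsExVertex (Q : CQ ι Attr) (i : ι) : Prop := (Q.attrs i \ Q.head).Nonempty

/-- `E` is a connected component of the existential-connectivity graph `G^∃_Q`. -/
def IsCompOf (Q : CQ ι Attr) (E : Set ι) : Prop :=
  E.Nonempty ∧ (∀ i ∈ E, IsExVertex Q i) ∧
  (∀ i ∈ E, ∀ j : ι, IsExVertex Q j → exAdj Q i j → j ∈ E) ∧
  (∀ i ∈ E, ∀ j ∈ E, Relation.ReflTransGen (fun a b => exAdj Q a b ∧ b ∈ E) i j)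

/-- `r` is a dominant relation for the set `E` of relations: every output
attribute appearing in a relation of `E` also appears in `r`. -/
def IsDominant (Q : CQ ι Attr) (E : Set ι) (r : ι) : Prop :=
  ∀ j ∈ E, Q.attrs j ∩ Q.head ⊆ Q.attrs r

/-- `Q` is acyclic: it admits a join tree, i.e. a tree on its relations such
that, for every attribute, the set of relations containing it induces a
connected subtree. -/
def IsAcyclicCQ (Q : CQ ι Attr) : Prop :=
  ∃ T : SimpleGraph ι, T.IsTree ∧
    ∀ a : Attr, {i : ι | a ∈ Q.attrs i}.Nonempty →
      (T.induce {i : ι | a ∈ Q.attrs i}).Connected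

/-- The query obtained from `Q` by adding one more relation atom whose
attribute set is exactly `head(Q)`. -/
def CQ.extendByHead (Q : CQ ι Attr) : CQ (Option ι) Attr where
  attrs := fun o => o.elim Q.head Q.attrs
  head := Q.head

/-- `Q` is free-connex: acyclic, and still acyclic after adding an atom over
exactly `head(Q)`. -/
def IsFreeConnex (Q : CQ ι Attr) : Prop :=
  IsAcyclicCQ Q ∧ IsAcyclicCQ Q.extendByHead

/-!
Let `T` be a join tree of `Q` extended by the head atom `h`. Relations sharing a non-output
attribute are joined inside that attribute's subtree, which avoids `h`; hence a component `E` of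
`G^∃_Q` lies in a single component of `T - h`. If `a` is an output attribute of `j ∈ E`, the walk
from `j` to `h` inside the subtree of `a` enters `h` through a neighbour of `h` that contains `a`
and lies in the component of `T - h` containing `j`. As `T` is acyclic, every component of
`T - h` contains at most one neighbour of `h`, and that neighbour dominates `E`.
-/

namespace SimpleGraph

variable {V : Type*} {G : SimpleGraph V} {v x y z p q : V}

def ReachableAvoiding (G : SimpleGraph V) (v x y : V) : Prop :=
  ∃ w : G.Walk x y, v ∉ w.support

namespace ReachableAvoiding

lemma refl (hx : x ≠ v) : G.ReachableAvoiding v x x :=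
  ⟨.nil, by simpa using hx.symm⟩

lemma symm (h : G.ReachableAvoiding v x y) : G.ReachableAvoiding v y x := by
  obtain ⟨w, hw⟩ := h
  exact ⟨w.reverse, by simpa using hw⟩

lemma trans (hxy : G.ReachableAvoiding v x y) (hyz : G.ReachableAvoiding v y z) :
    G.ReachableAvoiding v x z := by
  obtain ⟨w, hw⟩ := hxy
  obtain ⟨w', hw'⟩ := hyz
  refine ⟨w.append w', ?_⟩
  rw [Walk.mem_support_append_iff]
  exact not_or.mpr ⟨hw, hw'⟩

end ReachableAvoiding

lemma Walk.exists_adj_reachableAvoiding (w : G.Walk x v) (hx : x ≠ v) :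
    ∃ p ∈ w.support, G.Adj p v ∧ G.ReachableAvoiding v x p := by
  induction w with
  | nil => exact absurd rfl hx
  | @cons x y v hxy w ih =>
    by_cases hy : y = v
    · subst hy
      exact ⟨x, by simp, hxy, .refl hx⟩
    · obtain ⟨p, hp, hpv, w', hw'⟩ := ih hy
      refine ⟨p, by simp [hp], hpv, w'.cons hxy, ?_⟩
      simpa using ⟨hx.symm, hw'⟩

lemma IsAcyclic.eq_of_adj_of_reachableAvoiding (hG : G.IsAcyclic) (hp : G.Adj p v)
    (hq : G.Adj q v) (hpq : G.ReachableAvoiding v p q) : p = q := by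
  obtain ⟨w, hw⟩ := hpq
  have hbridge := isBridge_iff_forall_walk_mem_edges.mp
    (isAcyclic_iff_forall_adj_isBridge.mp hG hp) (w.concat hq)
  rw [Walk.edges_concat, List.concat_eq_append, List.mem_append, List.mem_singleton] at hbridge
  rcases hbridge with hmem | heq
  · exact absurd (w.snd_mem_support_of_mem_edges hmem) hw
  · exact Sym2.congr_left.mp heq

lemma Preconnected.exists_walk_support_subset {s : Set V} (hs : (G.induce s).Preconnected)
    (hx : x ∈ s) (hy : y ∈ s) : ∃ w : G.Walk x y, ∀ z ∈ w.support, z ∈ s := by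
  obtain ⟨w⟩ := hs ⟨x, hx⟩ ⟨y, hy⟩
  refine ⟨w.map (Embedding.induce s).toHom, fun z hz => ?_⟩
  obtain ⟨z, -, rfl⟩ := List.mem_map.mp (Walk.support_map _ w ▸ hz)
  exact z.2

end SimpleGraph

open SimpleGraph

def IsJoinTree (Q : CQ ι Attr) (T : SimpleGraph ι) : Prop :=
  T.IsTree ∧ ∀ a : Attr, {i : ι | a ∈ Q.attrs i}.Nonempty →
    (T.induce {i : ι | a ∈ Q.attrs i}).Connected

lemma IsJoinTree.exists_walk_of_mem_attrs {Q : CQ ι Attr} {T : SimpleGraph ι}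
    (hT : IsJoinTree Q T) {a : Attr} {i j : ι} (hi : a ∈ Q.attrs i) (hj : a ∈ Q.attrs j) :
    ∃ w : T.Walk i j, ∀ k ∈ w.support, a ∈ Q.attrs k :=
  (hT.2 a ⟨i, hi⟩).preconnected.exists_walk_support_subset hi hj

section ExtendByHead

variable {Q : CQ ι Attr} {T : SimpleGraph (Option ι)} {i j : ι}

lemma IsJoinTree.reachableAvoiding_of_exAdj (hT : IsJoinTree Q.extendByHead T)
    (h : exAdj Q i j) : T.ReachableAvoiding none (some i) (some j) := by
  obtain ⟨a, ⟨hai, haj⟩, ha⟩ := h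
  obtain ⟨w, hw⟩ := hT.exists_walk_of_mem_attrs (i := some i) (j := some j) hai haj
  exact ⟨w, fun hnone => ha (hw none hnone)⟩

lemma IsJoinTree.reachableAvoiding_of_mem_comp (hT : IsJoinTree Q.extendByHead T) {E : Set ι}
    (hE : IsCompOf Q E) (hi : i ∈ E) (hj : j ∈ E) :
    T.ReachableAvoiding none (some i) (some j) := by
  have hij := hE.2.2.2 i hi j hj
  clear hj
  induction hij with
  | refl => exact .refl (Option.some_ne_none i)
  | tail _ hstep ih => exact ih.trans (hT.reachableAvoiding_of_exAdj hstep.1)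

lemma IsJoinTree.exists_adj_none_of_mem_head (hT : IsJoinTree Q.extendByHead T) {a : Attr}
    (ha : a ∈ Q.attrs j ∩ Q.head) :
    ∃ p, T.Adj (some p) none ∧ a ∈ Q.attrs p ∧ T.ReachableAvoiding none (some j) (some p) := by
  obtain ⟨w, hw⟩ := hT.exists_walk_of_mem_attrs (i := some j) (j := none) ha.1 ha.2
  obtain ⟨p, hp, hpnone, hjp⟩ := w.exists_adj_reachableAvoiding (Option.some_ne_none j)
  cases p with
  | none => exact absurd hpnone (T.loopless.irrefl _)
  | some p => exact ⟨p, hpnone, hw _ hp, hjp⟩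

end ExtendByHead

/-- Every free-connex conjunctive query has the head-domination
property: for each connected component `E` of the existential-connectivity
graph `G^∃_Q`, there exists a relation `r ∈ rels(Q)` such that every output
attribute appearing in any relation of `E` also appears in `r`. -/
theorem freeConnex_head_domination (Q : CQ ι Attr) (hfc : IsFreeConnex Q)
    (E : Set ι) (hE : IsCompOf Q E) :
    ∃ r : ι, IsDominant Q E r := by
  obtain ⟨T, hT⟩ : ∃ T, IsJoinTree Q.extendByHead T := hfc.2
  obtain ⟨i₀, -⟩ := hE.1
  by_cases hout : ∃ j ∈ E, (Q.attrs j ∩ Q.head).Nonempty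
  swap
  · push Not at hout
    exact ⟨i₀, fun j hj => by simp [hout j hj]⟩
  obtain ⟨j₀, hj₀, a₀, ha₀⟩ := hout
  obtain ⟨r, hr, -, hj₀r⟩ := hT.exists_adj_none_of_mem_head ha₀
  refine ⟨r, fun j hj a ha => ?_⟩
  obtain ⟨p, hp, hap, hjp⟩ := hT.exists_adj_none_of_mem_head ha
  have hpr : some p = some r := hT.1.isAcyclic.eq_of_adj_of_reachableAvoiding hp hr
    (hjp.symm.trans ((hT.reachableAvoiding_of_mem_comp hE hj hj₀).trans hj₀r))
  rwa [Option.some_inj.mp hpr] at hap
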